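/- Define κ : ℝ → ℝ by κ(t) = {t/2} + 1/2 − {t/2 + 1/2}, where {x} is the fractional part of x. Let ρ be a complex number with 0 < Re(ρ) < 1 such that η(ρ) = 0, where η is the Dirichlet eta function. Then ρ · ∫_{1/2}^{1} κ(2t) · t^(−ρ−1) dt + ρ · ∫₁^∞ (1/2) · t^(−ρ−1) dt + ρ · ∫₁^∞ {t} · t^(−ρ−1) dt = ρ · ∫₁^∞ {t + 1/2} · t^(−ρ−1) dt. -/

import Mathlib

/-!
Since `κ(2t) = {t} + 1/2 - {t + 1/2}`, the identity says
`ρ ∫_{1/2}^∞ κ(2t) t^(-ρ-1) dt = 0`. On `[k + 1/2, k + 3/2)` the function `κ(2t)` is the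
indicator of `[k + 1/2, k + 1)`, so this piece contributes
`(k + 1/2)^(-ρ) - (k + 1)^(-ρ) = 2^ρ ((2k+1)^(-ρ) - (2k+2)^(-ρ))`, and summing over `k` gives
`2^ρ η(ρ) = 0`. Countable additivity of the integral makes the series converge to it, so
the `tsum` defining `η` is not a junk value.
-/

noncomputable def kappa (t : ℝ) : ℝ := Int.fract (t / 2) + 1 / 2 - Int.fract (t / 2 + 1 / 2)

noncomputable def dirichletEta (s : ℂ) : ℂ :=
  ∑' k : ℕ, (1 / ((2 * (k : ℂ) + 1)) ^ s - 1 / ((2 * (k : ℂ) + 2)) ^ s)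

open MeasureTheory Set Complex Function

section IcoCover

variable {α : Type*} [Ring α] [LinearOrder α] [IsStrictOrderedRing α]

theorem iUnion_Ico_add_natCast [FloorSemiring α] (a : α) :
    ⋃ n : ℕ, Ico (a + n) (a + n + 1) = Ici a := by
  ext x
  simp only [mem_iUnion, mem_Ico, mem_Ici]
  refine ⟨fun ⟨n, hn, _⟩ => le_trans (le_add_of_nonneg_right n.cast_nonneg) hn,
    fun hx => ⟨⌊x - a⌋₊, le_sub_iff_add_le'.1 (Nat.floor_le (sub_nonneg.2 hx)), ?_⟩⟩
  rw [add_assoc]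
  exact sub_lt_iff_lt_add'.1 (Nat.lt_floor_add_one (x - a))

theorem pairwise_disjoint_Ico_add_natCast (a : α) :
    Pairwise (Disjoint on fun n : ℕ => Ico (a + n) (a + n + 1)) := fun m n hmn => by
  simpa only [onFun, Int.cast_natCast] using
    pairwise_disjoint_Ico_add_intCast a (Nat.cast_injective.ne hmn : (m : ℤ) ≠ n)

end IcoCover

lemma kappa_two_mul (t : ℝ) : kappa (2 * t) = Int.fract t + 1 / 2 - Int.fract (t + 1 / 2) := by
  rw [kappa, mul_div_cancel_left₀ t two_ne_zero]

lemma abs_kappa_le (t : ℝ) : |kappa t| ≤ 3 / 2 := by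
  rw [kappa, abs_le]
  constructor <;>
    linarith [Int.fract_nonneg (t / 2), Int.fract_lt_one (t / 2),
      Int.fract_nonneg (t / 2 + 1 / 2), Int.fract_lt_one (t / 2 + 1 / 2)]

lemma measurable_kappa : Measurable kappa := by
  unfold kappa
  fun_prop

lemma kappa_eq_one_of_mem_Ico {t : ℝ} (n : ℤ) (ht : t ∈ Ico (2 * n + 1 : ℝ) (2 * n + 2)) :
    kappa t = 1 := by
  have h₁ : Int.fract (t / 2) = t / 2 - n :=
    Int.fract_eq_iff.2 ⟨by linarith [ht.1], by linarith [ht.2], n, by ring⟩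
  have h₂ : Int.fract (t / 2 + 1 / 2) = t / 2 + 1 / 2 - (n + 1) :=
    Int.fract_eq_iff.2 ⟨by linarith [ht.1], by linarith [ht.2], n + 1, by push_cast; ring⟩
  rw [kappa, h₁, h₂]
  ring

lemma kappa_eq_zero_of_mem_Ico {t : ℝ} (n : ℤ) (ht : t ∈ Ico (2 * n : ℝ) (2 * n + 1)) :
    kappa t = 0 := by
  have h₁ : Int.fract (t / 2) = t / 2 - n :=
    Int.fract_eq_iff.2 ⟨by linarith [ht.1], by linarith [ht.2], n, by ring⟩
  have h₂ : Int.fract (t / 2 + 1 / 2) = t / 2 + 1 / 2 - n :=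
    Int.fract_eq_iff.2 ⟨by linarith [ht.1], by linarith [ht.2], n, by ring⟩
  rw [kappa, h₁, h₂]
  ring

lemma integrableOn_Ioi_cpow_neg_sub_one {ρ : ℂ} (hρ : 0 < ρ.re) {c : ℝ} (hc : 0 < c) :
    IntegrableOn (fun t : ℝ => (t : ℂ) ^ (-ρ - 1)) (Ioi c) :=
  integrableOn_Ioi_cpow_of_lt (by rw [sub_re, neg_re, one_re]; linarith) hc

lemma integrableOn_Ioi_ofReal_mul_cpow {f : ℝ → ℝ} {C : ℝ} (hf : Measurable f)
    (hC : ∀ t, |f t| ≤ C) {ρ : ℂ} (hρ : 0 < ρ.re) {c : ℝ} (hc : 0 < c) :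
    IntegrableOn (fun t : ℝ => (f t : ℂ) * (t : ℂ) ^ (-ρ - 1)) (Ioi c) :=
  (integrableOn_Ioi_cpow_neg_sub_one hρ hc).bdd_mul (by fun_prop)
    (ae_of_all _ fun t => by rw [norm_real, Real.norm_eq_abs]; exact hC t)

lemma integrableOn_Ioi_kappa_two_mul_mul_cpow {ρ : ℂ} (hρ : 0 < ρ.re) {c : ℝ} (hc : 0 < c) :
    IntegrableOn (fun t : ℝ => (kappa (2 * t) : ℂ) * (t : ℂ) ^ (-ρ - 1)) (Ioi c) :=
  integrableOn_Ioi_ofReal_mul_cpow (f := fun t => kappa (2 * t))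
    (measurable_kappa.comp (measurable_const_mul 2)) (fun t => abs_kappa_le (2 * t)) hρ hc

lemma mul_integral_cpow_neg_sub_one {ρ : ℂ} (hρ : ρ ≠ 0) {a b : ℝ} (ha : 0 < a)
    (hb : 0 < b) :
    ρ * ∫ t in a..b, (t : ℂ) ^ (-ρ - 1) = (a : ℂ) ^ (-ρ) - (b : ℂ) ^ (-ρ) := by
  have h0 : (0 : ℝ) ∉ uIcc a b := fun h => by
    rcases mem_uIcc.1 h with h | h <;> linarith [h.1, h.2]
  rw [integral_cpow (Or.inr ⟨fun h => hρ (by linear_combination -h), h0⟩), sub_add_cancel]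
  field_simp
  ring

lemma ofReal_div_two_cpow_neg (ρ : ℂ) {x : ℝ} (hx : 0 ≤ x) :
    ((x / 2 : ℝ) : ℂ) ^ (-ρ) = 2 ^ ρ * (1 / (x : ℂ) ^ ρ) := by
  rw [ofReal_div, div_cpow_ofReal_nonneg hx zero_le_two, cpow_neg, cpow_neg]
  push_cast
  field_simp

lemma mul_setIntegral_Ico_kappa_two_mul {ρ : ℂ} (hρ : ρ ≠ 0) (k : ℕ) :
    ρ * ∫ t in Ico (1 / 2 + k : ℝ) (1 / 2 + k + 1),
        (kappa (2 * t) : ℂ) * (t : ℂ) ^ (-ρ - 1) =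
      2 ^ ρ * (1 / (2 * (k : ℂ) + 1) ^ ρ - 1 / (2 * (k : ℂ) + 2) ^ ρ) := by
  have hk : (0 : ℝ) ≤ k := k.cast_nonneg
  have hind :
      ∫ t in Ico (1 / 2 + k : ℝ) (1 / 2 + k + 1),
        (kappa (2 * t) : ℂ) * (t : ℂ) ^ (-ρ - 1) =
      ∫ t in Ico (1 / 2 + k : ℝ) (1 / 2 + k + 1),
        (Ico (1 / 2 + k : ℝ) (k + 1)).indicator (fun t => (t : ℂ) ^ (-ρ - 1)) t := by
    refine setIntegral_congr_fun measurableSet_Ico fun t ht => ?_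
    by_cases h : t < k + 1
    · rw [indicator_of_mem (mem_Ico.2 ⟨ht.1, h⟩),
        kappa_eq_one_of_mem_Ico k ⟨by push_cast; linarith [ht.1], by push_cast; linarith⟩,
        ofReal_one, one_mul]
    · rw [indicator_of_notMem fun h' => h h'.2,
        kappa_eq_zero_of_mem_Ico (k + 1 : ℤ)
          ⟨by push_cast; linarith, by push_cast; linarith [ht.2]⟩,
        ofReal_zero, zero_mul]
  rw [hind, setIntegral_indicator measurableSet_Ico,
    inter_eq_right.2 (Ico_subset_Ico_right (by linarith)), integral_Ico_eq_integral_Ioc,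
    ← intervalIntegral.integral_of_le (by linarith),
    mul_integral_cpow_neg_sub_one hρ (by positivity) (by positivity),
    show (1 / 2 + k : ℝ) = (2 * k + 1) / 2 by ring, show (k + 1 : ℝ) = (2 * k + 2) / 2 by ring,
    ofReal_div_two_cpow_neg ρ (by positivity), ofReal_div_two_cpow_neg ρ (by positivity)]
  push_cast
  ring

lemma mul_integral_Ioi_kappa_two_mul {ρ : ℂ} (hρ : 0 < ρ.re) :
    ρ * ∫ t in Ioi (1 / 2 : ℝ), (kappa (2 * t) : ℂ) * (t : ℂ) ^ (-ρ - 1) =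
      2 ^ ρ * dirichletEta ρ := by
  have hρ₀ : ρ ≠ 0 := fun h => by simp [h] at hρ
  have hint : IntegrableOn (fun t : ℝ => (kappa (2 * t) : ℂ) * (t : ℂ) ^ (-ρ - 1))
      (⋃ k : ℕ, Ico (1 / 2 + k : ℝ) (1 / 2 + k + 1)) := by
    rw [iUnion_Ico_add_natCast, integrableOn_Ici_iff_integrableOn_Ioi]
    exact integrableOn_Ioi_kappa_two_mul_mul_cpow hρ (by norm_num)
  have hsum := (hasSum_integral_iUnion (fun k => measurableSet_Ico)
    (pairwise_disjoint_Ico_add_natCast _) hint).mul_left ρ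
  rw [iUnion_Ico_add_natCast, integral_Ici_eq_integral_Ioi] at hsum
  rw [← hsum.tsum_eq, dirichletEta, ← tsum_mul_left]
  exact tsum_congr (mul_setIntegral_Ico_kappa_two_mul hρ₀)

theorem eta_zero_integral_identity_general (ρ : ℂ) (h0 : 0 < ρ.re)
    (hη : dirichletEta ρ = 0) :
    ρ * (∫ t in (1 / 2 : ℝ)..1, (kappa (2 * t) : ℂ) * (t : ℂ) ^ (-ρ - 1)) +
      ρ * (∫ t in Set.Ioi (1 : ℝ), (1 / 2 : ℂ) * (t : ℂ) ^ (-ρ - 1)) +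
      ρ * (∫ t in Set.Ioi (1 : ℝ), ((Int.fract t : ℝ) : ℂ) * (t : ℂ) ^ (-ρ - 1)) =
      ρ * ∫ t in Set.Ioi (1 : ℝ), ((Int.fract (t + 1 / 2) : ℝ) : ℂ) * (t : ℂ) ^ (-ρ - 1) := by
  have hfract (t : ℝ) : |Int.fract t| ≤ 1 := Int.abs_fract.trans_le (Int.fract_lt_one t).le
  have hhalf := (integrableOn_Ioi_cpow_neg_sub_one h0 one_pos).const_mul (1 / 2 : ℂ)
  have hfr := integrableOn_Ioi_ofReal_mul_cpow (by fun_prop) hfract h0 one_pos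
  have hfr' := integrableOn_Ioi_ofReal_mul_cpow (by fun_prop) (fun t => hfract (t + 1 / 2)) h0
    one_pos
  have hdecomp : (∫ t in Ioi (1 : ℝ), (1 / 2 : ℂ) * (t : ℂ) ^ (-ρ - 1)) +
      (∫ t in Ioi (1 : ℝ), ((Int.fract t : ℝ) : ℂ) * (t : ℂ) ^ (-ρ - 1)) -
      (∫ t in Ioi (1 : ℝ), ((Int.fract (t + 1 / 2) : ℝ) : ℂ) * (t : ℂ) ^ (-ρ - 1)) =
      ∫ t in Ioi (1 : ℝ), (kappa (2 * t) : ℂ) * (t : ℂ) ^ (-ρ - 1) := by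
    rw [← integral_add hhalf hfr, ← integral_sub ?_ hfr']
    · refine integral_congr_ae (ae_of_all _ fun t => ?_)
      simp only [kappa_two_mul]
      push_cast
      ring
    · exact hhalf.add hfr
  have hsplit := intervalIntegral.integral_interval_add_Ioi
    (integrableOn_Ioi_kappa_two_mul_mul_cpow h0 (by norm_num : (0 : ℝ) < 1 / 2))
    (integrableOn_Ioi_kappa_two_mul_mul_cpow h0 one_pos)
  linear_combination ρ * hdecomp + ρ * hsplit + mul_integral_Ioi_kappa_two_mul h0 + 2 ^ ρ * hη

theorem eta_zero_integral_identity (ρ : ℂ) (h0 : 0 < ρ.re) (h1 : ρ.re < 1)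
    (hη : dirichletEta ρ = 0) :
    ρ * (∫ t in (1 / 2 : ℝ)..1, (kappa (2 * t) : ℂ) * (t : ℂ) ^ (-ρ - 1)) +
      ρ * (∫ t in Set.Ioi (1 : ℝ), (1 / 2 : ℂ) * (t : ℂ) ^ (-ρ - 1)) +
      ρ * (∫ t in Set.Ioi (1 : ℝ), ((Int.fract t : ℝ) : ℂ) * (t : ℂ) ^ (-ρ - 1)) =
      ρ * ∫ t in Set.Ioi (1 : ℝ), ((Int.fract (t + 1 / 2) : ℝ) : ℂ) * (t : ℂ) ^ (-ρ - 1) :=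
  eta_zero_integral_identity_general ρ h0 hη
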